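/- Soundness of the Until consistency rule in the A/N case: for signals satisfying Assumption 1, if subformula ψ₁ has observation A (holds throughout the interval [kτ,(k+1)τ]) and ψ₂ has observation N (never holds on the interval), then the observation of ψ₁ U ψ₂ on that interval is either A or N — it cannot be Z or E. -/
import Mathlib

/-- The four observation patterns of an atomic proposition on a time interval. -/
inductive Obs where
  | A | Z | E | N
deriving DecidableEq

/-- `obsOf f a b o` : the truth pattern of the (time-indexed) property `f`
on the closed interval `[a, b]` is classified by the observation `o`. -/
def obsOf (f : ℝ → Prop) (a b : ℝ) : Obs → Prop
  | .A => ∀ t, a ≤ t → t ≤ b → f t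
  | .N => ∀ t, a ≤ t → t ≤ b → ¬ f t
  | .Z => ∃ c, a ≤ c ∧ c < b ∧ (∀ t, a ≤ t → t ≤ c → f t) ∧ (∀ t, c < t → t ≤ b → ¬ f t)
  | .E => ∃ c, a ≤ c ∧ c < b ∧ (∀ t, a ≤ t → t ≤ c → ¬ f t) ∧ (∀ t, c < t → t ≤ b → f t)

/-- Assumption 1 of the paper: (1) no double boundary crossing of any AP region
within time `τ`, and (2) at most one atomic proposition changes value across any
interval of length `τ`. -/
def Assumption1 {AP : Type} (ς : ℝ → AP → Bool) (τ : ℝ) : Prop :=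
  (∀ (p : AP) (t : ℝ), 0 ≤ t → ∀ t', 0 ≤ t' → t' ≤ τ →
      ς t p = ς (t + t') p → ∀ t'', 0 ≤ t'' → t'' ≤ t' → ς t p = ς (t + t'') p) ∧
  (∀ (p p' : AP) (t : ℝ), 0 ≤ t →
      ς t p ≠ ς (t + τ) p → ς t p' ≠ ς (t + τ) p' → p = p')

/-- Continuous-time LTL syntax (no Next operator). -/
inductive LTL (AP : Type) where
  | top
  | atom (p : AP)
  | neg (φ : LTL AP)
  | disj (φ ψ : LTL AP)
  | conj (φ ψ : LTL AP)
  | untl (φ ψ : LTL AP)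
  | rel (φ ψ : LTL AP)

/-- Signal semantics of continuous-time LTL. -/
def Sat {AP : Type} (ς : ℝ → AP → Bool) : LTL AP → ℝ → Prop
  | .top, _ => True
  | .atom p, t => ς t p = true
  | .neg φ, t => ¬ Sat ς φ t
  | .disj φ ψ, t => Sat ς φ t ∨ Sat ς ψ t
  | .conj φ ψ, t => Sat ς φ t ∧ Sat ς ψ t
  | .untl φ ψ, t => ∃ t', t ≤ t' ∧ Sat ς ψ t' ∧ ∀ t'', t ≤ t'' → t'' < t' → Sat ς φ t''
  | .rel φ ψ, t => ∀ t', t ≤ t' → ¬ Sat ς ψ t' → ∃ t'', t ≤ t'' ∧ t'' < t' ∧ Sat ς φ t''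

/-- Soundness of the Until consistency rule in the A/N case: if `ψ₁` has
observation `A` and `ψ₂` has observation `N` on a slice, then the observation of
`ψ₁ U ψ₂` on that slice is `A` or `N` (never `Z` or `E`). -/
theorem until_AN_sound {AP : Type} (ς : ℝ → AP → Bool) (τ : ℝ) (hτ : 0 < τ)
    (h1 : Assumption1 ς τ) (ψ₁ ψ₂ : LTL AP) (k : ℕ)
    (hA : obsOf (fun t => Sat ς ψ₁ t) ((k : ℝ) * τ) (((k : ℝ) + 1) * τ) .A)
    (hN : obsOf (fun t => Sat ς ψ₂ t) ((k : ℝ) * τ) (((k : ℝ) + 1) * τ) .N)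
    (o : Obs)
    (ho : obsOf (fun t => Sat ς (.untl ψ₁ ψ₂) t) ((k : ℝ) * τ) (((k : ℝ) + 1) * τ) o) :
    o = .A ∨ o = .N := by
  set a := (k : ℝ) * τ with ha
  set b := ((k : ℝ) + 1) * τ with hb
  have key : ∀ t0, a ≤ t0 → t0 ≤ b → Sat ς (.untl ψ₁ ψ₂) t0 →
      ∀ s, a ≤ s → s ≤ b → Sat ς (.untl ψ₁ ψ₂) s := by
    intro t0 ha0 hb0 hsat s has hsb
    obtain ⟨t', htt', hψ2, hψ1⟩ := hsat
    have hbt' : b < t' := by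
      by_contra h
      push_neg at h
      exact hN t' (le_trans ha0 htt') h hψ2
    refine ⟨t', le_trans hsb hbt'.le, hψ2, fun t'' h1' h2' => ?_⟩
    rcases le_or_gt t'' b with h | h
    · exact hA t'' (le_trans has h1') h
    · exact hψ1 t'' (le_trans hb0 h.le) h2'
  cases o with
  | A => exact Or.inl rfl
  | N => exact Or.inr rfl
  | Z =>
    exfalso
    obtain ⟨c, hac, hcb, hT, hF⟩ := ho
    exact hF b hcb le_rfl (key c hac hcb.le (hT c hac le_rfl) b (by nlinarith) le_rfl)
  | E =>
    exfalso
    obtain ⟨c, hac, hcb, hF, hT⟩ := ho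
    exact hF a le_rfl hac (key b (by nlinarith) le_rfl (hT b hcb le_rfl) a le_rfl (by nlinarith))
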